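/- There exist a real number α > 1 and a natural number n₀ such that for every even natural number n there is a finite set 𝒲ₙ of words over the alphabet {a, b, a⁻¹, b⁻¹} (lists over Fin 2 × Bool) with the following properties: (1) every w ∈ 𝒲ₙ has length n and represents the identity element of the free group F₂ on two generators; (2) if n ≥ n₀ then the cardinality of 𝒲ₙ is at least α^n; (3) for every integer t with n/4 ≤ t < n/2, the map sending w ∈ 𝒲ₙ to the element of F₂ represented by the initial subword w.take t is injective on 𝒲ₙ (i.e. the length-t prefixes of distinct words in 𝒲ₙ represent distinct elements of F₂). -/

import Mathlib

/-!
Pad each word `v ∈ {a, b}^(n/4)` with `a`'s to a positive word `u` of length `n/2` and take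
`u u⁻¹`, which is trivial of length `n`. For `n/4 ≤ t < n/2` the prefix of length `t` is a
positive word, hence reduced, so its value in `F₂` determines it and in particular determines `v`.
This gives `2^(n/4)` words, at least `(2^(1/8))^n` once `n ≥ 4`.
-/

/-- Evaluation of a word over the alphabet `{a, b, a⁻¹, b⁻¹}` (encoded as
`Fin 2 × Bool`) in the free group on two generators. -/
def wordEval (w : List (Fin 2 × Bool)) : FreeGroup (Fin 2) :=
  (w.map fun p => if p.2 then FreeGroup.of p.1 else (FreeGroup.of p.1)⁻¹).prod

open FreeGroup

section

variable {α : Type*}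

def positiveWord (v : List α) : List (α × Bool) := v.map (·, true)

lemma isReduced_positiveWord (v : List α) : IsReduced (positiveWord v) := by
  rw [positiveWord, FreeGroup.IsReduced, List.isChain_map]
  exact (List.pairwise_of_forall fun _ _ _ => rfl).isChain

lemma mk_positiveWord_injective [DecidableEq α] :
    Function.Injective fun v : List α => mk (positiveWord v) := by
  intro v w h
  have h' := congrArg toWord h
  simp only [toWord_mk, (isReduced_positiveWord _).reduce_eq] at h'
  exact List.map_injective_iff.2 (fun _ _ hab => (Prod.mk.inj hab).1) h'

lemma take_positiveWord (v : List α) (t : ℕ) :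
    (positiveWord v).take t = positiveWord (v.take t) :=
  (List.map_take ..).symm

lemma List.eq_of_take_append_eq {k t : ℕ} {v v' x x' : List α} (hv : v.length = k)
    (hv' : v'.length = k) (hkt : k ≤ t) (h : (v ++ x).take t = (v' ++ x').take t) :
    v = v' := by
  simpa [List.take_take, min_eq_left hkt, hv, hv'] using congrArg (List.take k) h

lemma mk_append_invRev (u : List (α × Bool)) : mk (u ++ invRev u) = 1 := by
  rw [← mul_mk, ← inv_mk, mul_inv_cancel]

end

lemma wordEval_eq_mk (w : List (Fin 2 × Bool)) : wordEval w = mk w := by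
  rw [← lift_of_apply (mk w), lift_mk]
  simp [wordEval, Bool.cond_eq_ite]

def paddedWord (m : ℕ) (v : List (Fin 2)) : List (Fin 2) :=
  v ++ List.replicate (m - v.length) 0

lemma length_paddedWord {m : ℕ} {v : List (Fin 2)} (h : v.length ≤ m) :
    (paddedWord m v).length = m := by
  simp [paddedWord, Nat.add_sub_cancel' h]


def paddedWordMulInv (m : ℕ) (v : List (Fin 2)) : List (Fin 2 × Bool) :=
  positiveWord (paddedWord m v) ++ invRev (positiveWord (paddedWord m v))

lemma length_paddedWordMulInv {m : ℕ} {v : List (Fin 2)} (h : v.length ≤ m) :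
    (paddedWordMulInv m v).length = 2 * m := by
  simp [paddedWordMulInv, invRev_length, positiveWord, length_paddedWord h, two_mul]

lemma wordEval_paddedWordMulInv (m : ℕ) (v : List (Fin 2)) :
    wordEval (paddedWordMulInv m v) = 1 := by
  rw [wordEval_eq_mk, paddedWordMulInv, mk_append_invRev]

lemma eq_of_wordEval_take_paddedWordMulInv_eq {m k t : ℕ} {v v' : List (Fin 2)}
    (hv : v.length = k) (hv' : v'.length = k) (hkt : k ≤ t) (htm : t ≤ m)
    (h : wordEval ((paddedWordMulInv m v).take t) = wordEval ((paddedWordMulInv m v').take t)) :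
    v = v' := by
  have hlen (u : List (Fin 2)) (hu : u.length = k) :
      t ≤ (positiveWord (paddedWord m u)).length := by
    simp [positiveWord, length_paddedWord (hu.trans_le (hkt.trans htm)), htm]
  rw [paddedWordMulInv, paddedWordMulInv, List.take_append_of_le_length (hlen v hv),
    List.take_append_of_le_length (hlen v' hv'), take_positiveWord, take_positiveWord,
    wordEval_eq_mk, wordEval_eq_mk] at h
  exact List.eq_of_take_append_eq hv hv' hkt (mk_positiveWord_injective h)

lemma rpow_inv_eight_pow_le {n : ℕ} (hn : 4 ≤ n) :
    ((2 : ℝ) ^ (8 : ℝ)⁻¹) ^ n ≤ 2 ^ (n / 4) :=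
  calc ((2 : ℝ) ^ (8 : ℝ)⁻¹) ^ n ≤ ((2 : ℝ) ^ (8 : ℝ)⁻¹) ^ (8 * (n / 4)) :=
        pow_le_pow_right₀ (Real.one_le_rpow (by norm_num) (by norm_num)) (by omega)
    _ = 2 ^ (n / 4) := by
        rw [pow_mul, show (8 : ℝ) = (8 : ℕ) by norm_num,
          Real.rpow_inv_natCast_pow (by norm_num) (by norm_num)]

theorem exists_words_with_distinct_prefixes :
    ∃ (α : ℝ) (n₀ : ℕ), 1 < α ∧
      ∀ n : ℕ, Even n →
        ∃ W : Finset (List (Fin 2 × Bool)),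
          (∀ w ∈ W, w.length = n ∧ wordEval w = 1) ∧
          (n₀ ≤ n → (α : ℝ) ^ n ≤ (W.card : ℝ)) ∧
          (∀ t : ℕ, n / 4 ≤ t → t < n / 2 →
            Set.InjOn (fun w : List (Fin 2 × Bool) => wordEval (w.take t)) ↑W) := by
  refine ⟨2 ^ (8 : ℝ)⁻¹, 4, Real.one_lt_rpow (by norm_num) (by norm_num), fun n hn => ?_⟩
  have hkm : n / 4 ≤ n / 2 := by omega
  have hinj (v v' : Fin (n / 4) → Fin 2) (t : ℕ) (hkt : n / 4 ≤ t) (htm : t ≤ n / 2)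
      (h : wordEval ((paddedWordMulInv (n / 2) (List.ofFn v)).take t) =
        wordEval ((paddedWordMulInv (n / 2) (List.ofFn v')).take t)) : v = v' :=
    List.ofFn_injective
      (eq_of_wordEval_take_paddedWordMulInv_eq List.length_ofFn List.length_ofFn hkt htm h)
  refine ⟨Finset.univ.image fun v : Fin (n / 4) → Fin 2 =>
    paddedWordMulInv (n / 2) (List.ofFn v), ?_, fun hn4 => ?_, ?_⟩
  · simp only [Finset.mem_image]
    rintro _ ⟨v, -, rfl⟩
    obtain ⟨r, rfl⟩ := hn
    refine ⟨?_, wordEval_paddedWordMulInv _ _⟩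
    rw [length_paddedWordMulInv (List.length_ofFn.trans_le hkm)]
    omega
  · have hinj' : Function.Injective fun v : Fin (n / 4) → Fin 2 =>
        paddedWordMulInv (n / 2) (List.ofFn v) :=
      fun v v' h => hinj v v' _ le_rfl hkm (congrArg (fun w => wordEval (w.take (n / 4))) h)
    rw [Finset.card_image_of_injective _ hinj', Finset.card_univ, Fintype.card_fun,
      Fintype.card_fin, Fintype.card_fin]
    exact_mod_cast rpow_inv_eight_pow_le hn4
  · intro t hkt htm
    rw [Finset.coe_image]
    rintro _ ⟨v, -, rfl⟩ _ ⟨v', -, rfl⟩ h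
    rw [hinj v v' t hkt htm.le h]
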